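/- Let κ be an infinite cardinal, let λ = κ⁺, and let P be the poset of partial functions p : λ ⇀ 2 with |dom(p)| < λ. Let ⟨D_α : α < λ⟩ be dense subsets of P and let R ⊆ λ be arbitrary. Then there exists a filter H on P meeting every D_α together with a strictly increasing sequence of ordinals ⟨η_α : α < λ⟩ below λ such that the union f = ⋃H is a (partial) function satisfying f(η_α) = 1 if α ∈ R and f(η_α) = 0 if α ∉ R. -/

import Mathlib

/-- The Cohen-style poset `Add(A, κ)` of partial functions `A ⇀ 2` whose domain has
cardinality `< κ`, ordered by reverse extension. -/
def Cohen (A : Type u) (κ : Cardinal.{u}) : Type u :=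
  {p : A → Option Bool // Cardinal.mk {a : A | p a ≠ none} < κ}

instance (A : Type u) (κ : Cardinal.{u}) : PartialOrder (Cohen A κ) where
  le p q := ∀ a : A, q.1 a ≠ none → p.1 a = q.1 a
  le_refl p a _ := rfl
  le_trans p q r hpq hqr a ha := by
    have h1 := hqr a ha
    have h2 := hpq a (by rw [h1]; exact ha)
    rw [h2, h1]
  le_antisymm p q hpq hqp := by
    apply Subtype.ext; funext a
    by_cases hq : q.1 a = none
    · by_cases hp : p.1 a = none
      · rw [hp, hq]
      · exact absurd ((hqp a hp).symm.trans hq) hp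
    · exact hpq a hq

namespace Stmt10Aux
noncomputable section
open Cardinal Ordinal Set
open scoped Classical

universe u

abbrev T (κ : Cardinal.{u}) : Type u := (Order.succ κ).ord.ToType

abbrev Co (κ : Cardinal.{u}) : Type u := Cohen (T κ) (Order.succ κ)

theorem wfT {κ : Cardinal.{u}} : WellFounded ((· < ·) : T κ → T κ → Prop) := IsWellFounded.wf

theorem mk_Iio_lt {κ : Cardinal.{u}} (α : T κ) : #{β : T κ | β < α} < Order.succ κ :=
  mk_Iio_ord_toType α

theorem bounded_of_small {κ : Cardinal.{u}} (hκ : ℵ₀ ≤ κ) (s : Set (T κ))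
    (h : #s < Order.succ κ) : ∃ b : T κ, ∀ x ∈ s, x < b := by
  have hwo : IsWellOrder (T κ) ((· < ·) : T κ → T κ → Prop) := isWellOrder_lt
  by_contra hc
  push_neg at hc
  have hcof : IsCofinal s := fun a => by obtain ⟨x, hx, hax⟩ := hc a; exact ⟨x, hx, hax⟩
  have hle := Order.cof_le hcof
  rw [Ordinal.cof_toType, (Cardinal.isRegular_succ hκ).cof_ord] at hle
  exact absurd h (not_lt.2 hle)


/-- raw union of prior conditions, via least index -/
def uraw {κ : Cardinal.{u}} (hκ : ℵ₀ ≤ κ)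
    (D : T κ → Set (Co κ)) (hD : ∀ α, ∀ p, ∃ q ∈ D α, q ≤ p) (R : Set (T κ))
    (α : T κ) (prior : ∀ β : T κ, β < α → Co κ × T κ) : T κ → Option Bool := fun a =>
  if h : {β : T κ | ∃ hb : β < α, ((prior β hb).1).1 a ≠ none}.Nonempty then
    ((prior (wfT.min _ h) (wfT.min_mem _ h).choose).1).1 a
  else none

theorem uraw_dom {κ : Cardinal.{u}} (hκ : ℵ₀ ≤ κ)
    (D : T κ → Set (Co κ)) (hD : ∀ α, ∀ p, ∃ q ∈ D α, q ≤ p) (R : Set (T κ))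
    (α : T κ) (prior : ∀ β : T κ, β < α → Co κ × T κ) :
    #{a : T κ | uraw hκ D hD R α prior a ≠ none} < Order.succ κ := by
  have hsub : {a : T κ | uraw hκ D hD R α prior a ≠ none} ⊆
      ⋃ β : {β : T κ // β < α}, {a : T κ | ((prior β.1 β.2).1).1 a ≠ none} := by
    intro a ha
    simp only [mem_setOf_eq, uraw] at ha
    split at ha
    · next h =>
      exact Set.mem_iUnion.2 ⟨⟨wfT.min _ h, (wfT.min_mem _ h).choose⟩, ha⟩
    · exact absurd rfl ha
  refine lt_of_le_of_lt (mk_le_mk_of_subset hsub) ?_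
  refine lt_of_le_of_lt mk_iUnion_le_sum_mk ?_
  exact Cardinal.sum_lt_of_isRegular (Cardinal.isRegular_succ hκ) (mk_Iio_lt α)
    (fun β => (prior β.1 β.2).1.2)

def ucond {κ : Cardinal.{u}} (hκ : ℵ₀ ≤ κ)
    (D : T κ → Set (Co κ)) (hD : ∀ α, ∀ p, ∃ q ∈ D α, q ≤ p) (R : Set (T κ))
    (α : T κ) (prior : ∀ β : T κ, β < α → Co κ × T κ) : Co κ := ⟨uraw hκ D hD R α prior, uraw_dom hκ D hD R α prior⟩

theorem ucond_le {κ : Cardinal.{u}} (hκ : ℵ₀ ≤ κ)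
    (D : T κ → Set (Co κ)) (hD : ∀ α, ∀ p, ∃ q ∈ D α, q ≤ p) (R : Set (T κ))
    (α : T κ) (prior : ∀ β : T κ, β < α → Co κ × T κ)
    (hchain : ∀ (β : T κ) (h : β < α) (γ : T κ) (h' : γ < β),
      (prior β h).1 ≤ (prior γ (h'.trans h)).1)
    (β : T κ) (h : β < α) : ucond hκ D hD R α prior ≤ (prior β h).1 := by
  intro a ha
  have hne : {δ : T κ | ∃ hb : δ < α, ((prior δ hb).1).1 a ≠ none}.Nonempty :=
    ⟨β, h, ha⟩
  show uraw hκ D hD R α prior a = _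
  rw [uraw, dif_pos hne]
  have hmem := wfT.min_mem _ hne
  obtain ⟨hb0, hval⟩ : ∃ hb : wfT.min _ hne < α, ((prior (wfT.min _ hne) hb).1).1 a ≠ none :=
    hmem
  have hle : ¬ β < wfT.min _ hne := wfT.not_lt_min {δ : T κ | ∃ hb : δ < α, ((prior δ hb).1).1 a ≠ none} ⟨h, ha⟩
  rcases lt_or_eq_of_le (not_lt.1 hle) with hlt | heq
  · exact (hchain β h _ hlt a hval).symm
  · subst heq; rfl

def qcond {κ : Cardinal.{u}} (hκ : ℵ₀ ≤ κ)
    (D : T κ → Set (Co κ)) (hD : ∀ α, ∀ p, ∃ q ∈ D α, q ≤ p) (R : Set (T κ))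
    (α : T κ) (prior : ∀ β : T κ, β < α → Co κ × T κ) : Co κ := (hD α (ucond hκ D hD R α prior)).choose

theorem qcond_mem {κ : Cardinal.{u}} (hκ : ℵ₀ ≤ κ)
    (D : T κ → Set (Co κ)) (hD : ∀ α, ∀ p, ∃ q ∈ D α, q ≤ p) (R : Set (T κ))
    (α : T κ) (prior : ∀ β : T κ, β < α → Co κ × T κ) : qcond hκ D hD R α prior ∈ D α :=
  (hD α (ucond hκ D hD R α prior)).choose_spec.1

theorem qcond_le {κ : Cardinal.{u}} (hκ : ℵ₀ ≤ κ)
    (D : T κ → Set (Co κ)) (hD : ∀ α, ∀ p, ∃ q ∈ D α, q ≤ p) (R : Set (T κ))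
    (α : T κ) (prior : ∀ β : T κ, β < α → Co κ × T κ) : qcond hκ D hD R α prior ≤ ucond hκ D hD R α prior :=
  (hD α (ucond hκ D hD R α prior)).choose_spec.2

def sSet {κ : Cardinal.{u}} (hκ : ℵ₀ ≤ κ)
    (D : T κ → Set (Co κ)) (hD : ∀ α, ∀ p, ∃ q ∈ D α, q ≤ p) (R : Set (T κ))
    (α : T κ) (prior : ∀ β : T κ, β < α → Co κ × T κ) : Set (T κ) :=
  {x | ∃ β : T κ, ∃ hb : β < α, x = (prior β hb).2} ∪
    {a | (qcond hκ D hD R α prior).1 a ≠ none}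

theorem sSet_small {κ : Cardinal.{u}} (hκ : ℵ₀ ≤ κ)
    (D : T κ → Set (Co κ)) (hD : ∀ α, ∀ p, ∃ q ∈ D α, q ≤ p) (R : Set (T κ))
    (α : T κ) (prior : ∀ β : T κ, β < α → Co κ × T κ) : #(sSet hκ D hD R α prior) < Order.succ κ := by
  have h1 : #{x : T κ | ∃ β : T κ, ∃ hb : β < α, x = (prior β hb).2} < Order.succ κ := by
    have hsub : {x : T κ | ∃ β : T κ, ∃ hb : β < α, x = (prior β hb).2} ⊆
        Set.range (fun β : {β : T κ // β < α} => (prior β.1 β.2).2) := by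
      rintro x ⟨β, hb, rfl⟩
      exact ⟨⟨β, hb⟩, rfl⟩
    refine lt_of_le_of_lt (mk_le_mk_of_subset hsub) ?_
    exact lt_of_le_of_lt Cardinal.mk_range_le (mk_Iio_lt α)
  refine lt_of_le_of_lt (mk_union_le _ _) ?_
  exact Cardinal.add_lt_of_lt (hκ.trans (Order.le_succ κ)) h1 (qcond hκ D hD R α prior).2

def bnd {κ : Cardinal.{u}} (hκ : ℵ₀ ≤ κ)
    (D : T κ → Set (Co κ)) (hD : ∀ α, ∀ p, ∃ q ∈ D α, q ≤ p) (R : Set (T κ))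
    (α : T κ) (prior : ∀ β : T κ, β < α → Co κ × T κ) : T κ :=
  (bounded_of_small hκ _ (sSet_small hκ D hD R α prior)).choose

theorem bnd_spec {κ : Cardinal.{u}} (hκ : ℵ₀ ≤ κ)
    (D : T κ → Set (Co κ)) (hD : ∀ α, ∀ p, ∃ q ∈ D α, q ≤ p) (R : Set (T κ))
    (α : T κ) (prior : ∀ β : T κ, β < α → Co κ × T κ) :
    ∀ x ∈ sSet hκ D hD R α prior, x < bnd hκ D hD R α prior :=
  (bounded_of_small hκ _ (sSet_small hκ D hD R α prior)).choose_spec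

def step {κ : Cardinal.{u}} (hκ : ℵ₀ ≤ κ)
    (D : T κ → Set (Co κ)) (hD : ∀ α, ∀ p, ∃ q ∈ D α, q ≤ p) (R : Set (T κ))
    (α : T κ) (prior : ∀ β : T κ, β < α → Co κ × T κ) : Co κ × T κ :=
  (⟨fun a => if a = bnd hκ D hD R α prior then
      (if α ∈ R then some true else some false)
    else (qcond hκ D hD R α prior).1 a, by
      have hsub : {a : T κ | (if a = bnd hκ D hD R α prior then
          (if α ∈ R then some true else some false)
        else (qcond hκ D hD R α prior).1 a) ≠ none} ⊆
          insert (bnd hκ D hD R α prior) {a | (qcond hκ D hD R α prior).1 a ≠ none} := by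
        intro a ha
        simp only [mem_setOf_eq] at ha
        by_cases h : a = bnd hκ D hD R α prior
        · exact Or.inl h
        · rw [if_neg h] at ha
          exact Or.inr ha
      refine lt_of_le_of_lt (mk_le_mk_of_subset hsub) ?_
      refine lt_of_le_of_lt Cardinal.mk_insert_le ?_
      refine Cardinal.add_lt_of_lt (hκ.trans (Order.le_succ κ))
        (qcond hκ D hD R α prior).2 ?_
      exact lt_of_lt_of_le Cardinal.one_lt_aleph0 (hκ.trans (Order.le_succ κ))⟩,
    bnd hκ D hD R α prior)

def F {κ : Cardinal.{u}} (hκ : ℵ₀ ≤ κ)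
    (D : T κ → Set (Co κ)) (hD : ∀ α, ∀ p, ∃ q ∈ D α, q ≤ p) (R : Set (T κ)) :
    T κ → Co κ × T κ :=
  IsWellFounded.fix ((· < ·) : T κ → T κ → Prop)
    (fun α prior => step hκ D hD R α prior)

theorem F_eq {κ : Cardinal.{u}} (hκ : ℵ₀ ≤ κ)
    (D : T κ → Set (Co κ)) (hD : ∀ α, ∀ p, ∃ q ∈ D α, q ≤ p) (R : Set (T κ)) (α : T κ) :
    F hκ D hD R α = step hκ D hD R α (fun β _ => F hκ D hD R β) :=
  IsWellFounded.fix_eq _ _ α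

theorem eta_lt {κ : Cardinal.{u}} (hκ : ℵ₀ ≤ κ)
    (D : T κ → Set (Co κ)) (hD : ∀ α, ∀ p, ∃ q ∈ D α, q ≤ p) (R : Set (T κ))
    {α β : T κ} (h : β < α) : (F hκ D hD R β).2 < (F hκ D hD R α).2 := by
  rw [F_eq hκ D hD R α]
  exact bnd_spec hκ D hD R α _ _ (Or.inl ⟨β, h, rfl⟩)

theorem F_le_q {κ : Cardinal.{u}} (hκ : ℵ₀ ≤ κ)
    (D : T κ → Set (Co κ)) (hD : ∀ α, ∀ p, ∃ q ∈ D α, q ≤ p) (R : Set (T κ)) (α : T κ) :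
    (F hκ D hD R α).1 ≤ qcond hκ D hD R α (fun β _ => F hκ D hD R β) := by
  rw [F_eq hκ D hD R α]
  intro a ha
  have hmem : a ∈ sSet hκ D hD R α (fun β _ => F hκ D hD R β) := Or.inr ha
  have hlt := bnd_spec hκ D hD R α _ _ hmem
  show (if a = bnd hκ D hD R α _ then _ else _) = _
  rw [if_neg hlt.ne]

theorem chain {κ : Cardinal.{u}} (hκ : ℵ₀ ≤ κ)
    (D : T κ → Set (Co κ)) (hD : ∀ α, ∀ p, ∃ q ∈ D α, q ≤ p) (R : Set (T κ)) :
    ∀ α β : T κ, β < α → (F hκ D hD R α).1 ≤ (F hκ D hD R β).1 := by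
  intro α
  induction α using IsWellFounded.induction ((· < ·) : T κ → T κ → Prop) with
  | _ α ih =>
    intro β hβ
    refine le_trans (F_le_q hκ D hD R α) (le_trans (qcond_le hκ D hD R α _) ?_)
    exact ucond_le hκ D hD R α (fun β _ => F hκ D hD R β)
      (fun β h γ h' => ih β h γ h') β hβ

theorem F_le_of_le {κ : Cardinal.{u}} (hκ : ℵ₀ ≤ κ)
    (D : T κ → Set (Co κ)) (hD : ∀ α, ∀ p, ∃ q ∈ D α, q ≤ p) (R : Set (T κ))
    {β α : T κ} (h : β ≤ α) : (F hκ D hD R α).1 ≤ (F hκ D hD R β).1 := by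
  rcases lt_or_eq_of_le h with h1 | h1
  · exact chain hκ D hD R α β h1
  · subst h1; exact le_refl _

theorem F_value {κ : Cardinal.{u}} (hκ : ℵ₀ ≤ κ)
    (D : T κ → Set (Co κ)) (hD : ∀ α, ∀ p, ∃ q ∈ D α, q ≤ p) (R : Set (T κ)) (α : T κ) :
    ((F hκ D hD R α).1).1 ((F hκ D hD R α).2) =
      (if α ∈ R then some true else some false) := by
  rw [F_eq hκ D hD R α]
  exact if_pos rfl

end
end Stmt10Aux

/-- Coding lemma: in the poset of partial functions `κ⁺ ⇀ 2` with domains of size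
`< κ⁺`, given `κ⁺`-many dense sets `D_α` and a set `R ⊆ κ⁺`, there is a filter `H`
meeting every `D_α` together with a strictly increasing sequence `⟨η_α : α < κ⁺⟩`
such that the union of `H` takes value `1` at `η_α` iff `α ∈ R`. -/
theorem stmt10 (κ : Cardinal.{u}) (hκ : Cardinal.aleph0 ≤ κ)
    (D : (Order.succ κ).ord.ToType → Set (Cohen (Order.succ κ).ord.ToType (Order.succ κ)))
    (hD : ∀ α, ∀ p, ∃ q ∈ D α, q ≤ p)
    (R : Set (Order.succ κ).ord.ToType) :
    ∃ (H : Set (Cohen (Order.succ κ).ord.ToType (Order.succ κ)))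
      (η : (Order.succ κ).ord.ToType → (Order.succ κ).ord.ToType),
      H.Nonempty ∧
      (∀ p ∈ H, ∀ q, p ≤ q → q ∈ H) ∧
      (∀ p ∈ H, ∀ q ∈ H, ∃ r ∈ H, r ≤ p ∧ r ≤ q) ∧
      (∀ α, (H ∩ D α).Nonempty) ∧
      StrictMono η ∧
      (∀ α, (α ∈ R → ∃ p ∈ H, p.1 (η α) = some true) ∧
            (α ∉ R → ∃ p ∈ H, p.1 (η α) = some false)) := by
  haveI hne : Nonempty (Order.succ κ).ord.ToType := by
    rw [Ordinal.nonempty_toType_iff, Ne, Cardinal.ord_eq_zero]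
    exact fun h => absurd h (ne_of_gt (lt_of_le_of_lt (zero_le (a := κ)) (Order.lt_succ κ)))
  refine ⟨{r | ∃ α, (Stmt10Aux.F hκ D hD R α).1 ≤ r},
    fun α => (Stmt10Aux.F hκ D hD R α).2, ?_, ?_, ?_, ?_, ?_, ?_⟩
  · obtain ⟨α₀⟩ := hne
    exact ⟨(Stmt10Aux.F hκ D hD R α₀).1, α₀, le_refl _⟩
  · rintro p ⟨α, hα⟩ q hpq
    exact ⟨α, le_trans hα hpq⟩
  · rintro p ⟨α, hα⟩ q ⟨β, hβ⟩
    refine ⟨(Stmt10Aux.F hκ D hD R (max α β)).1, ⟨max α β, le_refl _⟩, ?_, ?_⟩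
    · exact le_trans (Stmt10Aux.F_le_of_le hκ D hD R (le_max_left α β)) hα
    · exact le_trans (Stmt10Aux.F_le_of_le hκ D hD R (le_max_right α β)) hβ
  · intro α
    exact ⟨Stmt10Aux.qcond hκ D hD R α (fun β _ => Stmt10Aux.F hκ D hD R β),
      ⟨α, Stmt10Aux.F_le_q hκ D hD R α⟩, Stmt10Aux.qcond_mem hκ D hD R α _⟩
  · exact fun a b h => Stmt10Aux.eta_lt hκ D hD R h
  · intro α
    constructor
    · intro hR
      exact ⟨(Stmt10Aux.F hκ D hD R α).1, ⟨α, le_refl _⟩, by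
        rw [Stmt10Aux.F_value hκ D hD R α, if_pos hR]⟩
    · intro hR
      exact ⟨(Stmt10Aux.F hκ D hD R α).1, ⟨α, le_refl _⟩, by
        rw [Stmt10Aux.F_value hκ D hD R α, if_neg hR]⟩
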